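/- Over ℤ[√2] (the ring of integers of ℚ(√2)), the binary quadratic form Q(x,y) = (2+√2)x² + 2xy + (2−√2)y² is totally positive definite, has determinant 1, and is additively indecomposable as a classical form (it is not a sum of two nonzero totally positive semi-definite classical binary forms over ℤ[√2]). -/

import Mathlib

/-- The two real embeddings of `ℚ(√2)` restricted to `ℤ[√2]`. -/
noncomputable def emb1 (x : ℤ√2) : ℝ := x.re + x.im * Real.sqrt 2
noncomputable def emb2 (x : ℤ√2) : ℝ := x.re - x.im * Real.sqrt 2

/-- The real binary form `a u² + b uv + c v²` is positive semi-definite. -/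
def IsPSD (a b c : ℝ) : Prop :=
  ∀ u v : ℝ, 0 ≤ a * u ^ 2 + b * (u * v) + c * v ^ 2

/-- The real binary form `a u² + b uv + c v²` is positive definite. -/
def IsPD (a b c : ℝ) : Prop :=
  ∀ u v : ℝ, (u ≠ 0 ∨ v ≠ 0) → 0 < a * u ^ 2 + b * (u * v) + c * v ^ 2

/-- The classical binary form `a x² + 2b xy + c y²` over `ℤ[√2]` is totally
positive semi-definite. -/
noncomputable def TotPSD (a b c : ℤ√2) : Prop :=
  IsPSD (emb1 a) (2 * emb1 b) (emb1 c) ∧ IsPSD (emb2 a) (2 * emb2 b) (emb2 c)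

lemma sqrt2_sq : Real.sqrt 2 ^ 2 = 2 := Real.sq_sqrt (by norm_num)

lemma sqrt2_gt : 1 < Real.sqrt 2 := by
  nlinarith [Real.sqrt_nonneg 2, sqrt2_sq]

lemma sqrt2_lt : Real.sqrt 2 < 3/2 := by
  nlinarith [Real.sqrt_nonneg 2, sqrt2_sq]

lemma emb1_add (x y : ℤ√2) : emb1 (x + y) = emb1 x + emb1 y := by
  simp [emb1, Zsqrtd.re_add, Zsqrtd.im_add]; push_cast; ring

lemma emb2_add (x y : ℤ√2) : emb2 (x + y) = emb2 x + emb2 y := by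
  simp [emb2, Zsqrtd.re_add, Zsqrtd.im_add]; push_cast; ring

lemma emb1_one : emb1 1 = 1 := by simp [emb1]

lemma emb2_one : emb2 1 = 1 := by simp [emb2]

lemma emb1_zero : emb1 0 = 0 := by simp [emb1]

lemma emb2_zero : emb2 0 = 0 := by simp [emb2]

lemma emb_eq_zero (x : ℤ√2) (h1 : emb1 x = 0) (h2 : emb2 x = 0) : x = 0 := by
  have hre : (x.re : ℝ) = 0 := by unfold emb1 at h1; unfold emb2 at h2; linarith
  have him : (x.im : ℝ) = 0 := by
    have hs := sqrt2_gt
    have : (x.im : ℝ) * Real.sqrt 2 = 0 := by unfold emb1 at h1; linarith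
    rcases mul_eq_zero.mp this with h | h
    · exact h
    · linarith
  rw [Zsqrtd.ext_iff]
  constructor <;> [exact_mod_cast hre; exact_mod_cast him]

lemma psd_left {a b c : ℝ} (h : IsPSD a b c) : 0 ≤ a := by
  have := h 1 0; simpa using this

lemma psd_right {a b c : ℝ} (h : IsPSD a b c) : 0 ≤ c := by
  have := h 0 1; simpa using this

lemma psd_b_of_a {b c : ℝ} (h : IsPSD 0 b c) : b = 0 := by
  by_contra hb
  have h0 := h (-(c+1)/b) 1
  have e : (0:ℝ) * (-(c+1)/b)^2 + b * ((-(c+1)/b) * 1) + c * 1^2 = -1 := by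
    field_simp
    ring
  rw [e] at h0
  linarith

lemma psd_b_of_c {a b : ℝ} (h : IsPSD a b 0) : b = 0 := by
  by_contra hb
  have h0 := h 1 (-(a+1)/b)
  have e : a * 1^2 + b * (1 * (-(a+1)/b)) + (0:ℝ) * (-(a+1)/b)^2 = -1 := by
    field_simp
    ring
  rw [e] at h0
  linarith

/-- Key integer lemma. -/
lemma key (p q : ℤ) (h1 : 0 ≤ (p:ℝ) + q * Real.sqrt 2)
    (h2 : (p:ℝ) + q * Real.sqrt 2 ≤ 2 + Real.sqrt 2)
    (h3 : 0 ≤ (p:ℝ) - q * Real.sqrt 2)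
    (h4 : (p:ℝ) - q * Real.sqrt 2 ≤ 2 - Real.sqrt 2) :
    (p = 0 ∧ q = 0) ∨ (p = 2 ∧ q = 1) := by
  have hs1 := sqrt2_gt
  have hs2 := sqrt2_lt
  set s := Real.sqrt 2 with hsdef
  have hp0 : 0 ≤ p := by
    have : (0:ℝ) ≤ p := by linarith
    exact_mod_cast this
  have hp2 : p ≤ 2 := by
    have : (p:ℝ) ≤ 2 := by linarith
    exact_mod_cast this
  interval_cases p
  · left
    refine ⟨rfl, ?_⟩
    push_cast at h1 h3
    by_contra hq
    rcases lt_or_gt_of_ne hq with h | h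
    · have hq' : q ≤ -1 := by omega
      have : (q:ℝ) ≤ -1 := by exact_mod_cast hq'
      nlinarith
    · have : (1:ℝ) ≤ q := by exact_mod_cast h
      nlinarith
  · exfalso
    push_cast at h3 h4
    have hq1 : q ≤ 0 := by
      by_contra h
      push_neg at h
      have : (1:ℝ) ≤ q := by exact_mod_cast h
      nlinarith
    have hq2 : 1 ≤ q := by
      by_contra h
      push_neg at h
      have : (q:ℝ) ≤ 0 := by exact_mod_cast Int.lt_add_one_iff.mp h
      nlinarith
    omega
  · right
    refine ⟨rfl, ?_⟩
    push_cast at h2 h4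
    have hq1 : q ≤ 1 := by
      by_contra h
      push_neg at h
      have : (2:ℝ) ≤ q := by exact_mod_cast h
      nlinarith
    have hq2 : 1 ≤ q := by
      by_contra h
      push_neg at h
      have : (q:ℝ) ≤ 0 := by exact_mod_cast Int.lt_add_one_iff.mp h
      nlinarith
    omega

lemma pd_lemma (s : ℝ) (hpos : 0 < 2 - s) (hpos2 : 0 < 2 + s) (hsq : s^2 = 2) :
    IsPD (2+s) 2 (2-s) := by
  intro u v huv
  have keyid : (2+s) * ((2+s) * u^2 + 2 * (u*v) + (2-s) * v^2)
      = ((2+s)*u + v)^2 + v^2 := by linear_combination (-(v^2)) * hsq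
  rcases eq_or_ne v 0 with hv | hv
  · subst hv
    have hu : u ≠ 0 := by tauto
    have : 0 < u^2 := by positivity
    nlinarith
  · have : 0 < v^2 := by positivity
    nlinarith [sq_nonneg ((2+s)*u + v)]

/-- Over `ℤ[√2]`, the form `Q(x,y) = (2+√2)x² + 2xy + (2−√2)y²` is totally
positive definite, has determinant `1`, and is additively indecomposable as a
classical form. -/
theorem stmt13 :
    (IsPD (emb1 ⟨2, 1⟩) (2 * emb1 1) (emb1 ⟨2, -1⟩) ∧
     IsPD (emb2 ⟨2, 1⟩) (2 * emb2 1) (emb2 ⟨2, -1⟩)) ∧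
    (⟨2, 1⟩ : ℤ√2) * ⟨2, -1⟩ - 1 ^ 2 = 1 ∧
    ¬ ∃ a₁ b₁ c₁ a₂ b₂ c₂ : ℤ√2,
      TotPSD a₁ b₁ c₁ ∧ TotPSD a₂ b₂ c₂ ∧
      ¬(a₁ = 0 ∧ b₁ = 0 ∧ c₁ = 0) ∧ ¬(a₂ = 0 ∧ b₂ = 0 ∧ c₂ = 0) ∧
      a₁ + a₂ = ⟨2, 1⟩ ∧ b₁ + b₂ = 1 ∧ c₁ + c₂ = ⟨2, -1⟩ := by
  have hs1 := sqrt2_gt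
  have hs2 := sqrt2_lt
  have hsq := sqrt2_sq
  have e1a : emb1 (⟨2, 1⟩ : ℤ√2) = 2 + Real.sqrt 2 := by simp [emb1]
  have e1c : emb1 (⟨2, -1⟩ : ℤ√2) = 2 - Real.sqrt 2 := by simp [emb1]; ring
  have e2a : emb2 (⟨2, 1⟩ : ℤ√2) = 2 - Real.sqrt 2 := by simp [emb2]
  have e2c : emb2 (⟨2, -1⟩ : ℤ√2) = 2 + Real.sqrt 2 := by simp [emb2]
  refine ⟨⟨?_, ?_⟩, ?_, ?_⟩
  · rw [e1a, e1c, emb1_one, mul_one]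
    exact pd_lemma (Real.sqrt 2) (by linarith) (by linarith) hsq
  · rw [e2a, e2c, emb2_one, mul_one]
    have := pd_lemma (-(Real.sqrt 2)) (by linarith) (by linarith) (by rw [neg_pow]; simpa using hsq)
    have h' : (2 + -(Real.sqrt 2)) = 2 - Real.sqrt 2 := by ring
    have h'' : (2 - -(Real.sqrt 2)) = 2 + Real.sqrt 2 := by ring
    rwa [h', h''] at this
  · decide
  · rintro ⟨a₁, b₁, c₁, a₂, b₂, c₂, ⟨h11, h12⟩, ⟨h21, h22⟩, hn1, hn2, ha, hb, hc⟩
    -- embedding values of sums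
    have hA1 : emb1 a₁ + emb1 a₂ = 2 + Real.sqrt 2 := by rw [← emb1_add, ha, e1a]
    have hA2 : emb2 a₁ + emb2 a₂ = 2 - Real.sqrt 2 := by rw [← emb2_add, ha, e2a]
    have hC1 : emb1 c₁ + emb1 c₂ = 2 - Real.sqrt 2 := by rw [← emb1_add, hc, e1c]
    have hC2 : emb2 c₁ + emb2 c₂ = 2 + Real.sqrt 2 := by rw [← emb2_add, hc, e2c]
    have pa1 := psd_left h11
    have pa1' := psd_left h12
    have pa2 := psd_left h21
    have pa2' := psd_left h22
    have pc1 := psd_right h11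
    have pc1' := psd_right h12
    have pc2 := psd_right h21
    have pc2' := psd_right h22
    -- a₁ is 0 or ⟨2,1⟩
    have haval : a₁ = 0 ∨ a₁ = ⟨2, 1⟩ := by
      have k := key a₁.re a₁.im
        (by have := pa1; unfold emb1 at this; exact this)
        (by have : emb1 a₁ ≤ 2 + Real.sqrt 2 := by linarith
            unfold emb1 at this; exact this)
        (by have := pa1'; unfold emb2 at this; exact this)
        (by have : emb2 a₁ ≤ 2 - Real.sqrt 2 := by linarith
            unfold emb2 at this; exact this)
      rcases k with ⟨h, h'⟩ | ⟨h, h'⟩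
      · left; rw [Zsqrtd.ext_iff]; exact ⟨h, h'⟩
      · right; rw [Zsqrtd.ext_iff]; exact ⟨h, h'⟩
    -- c₁ is 0 or ⟨2,-1⟩
    have hcval : c₁ = 0 ∨ c₁ = ⟨2, -1⟩ := by
      have k := key c₁.re (-c₁.im)
        (by have := pc1'; unfold emb2 at this; push_cast; push_cast at this; linarith)
        (by have : emb2 c₁ ≤ 2 + Real.sqrt 2 := by linarith
            unfold emb2 at this; push_cast; push_cast at this; linarith)
        (by have := pc1; unfold emb1 at this; push_cast; push_cast at this; linarith)
        (by have : emb1 c₁ ≤ 2 - Real.sqrt 2 := by linarith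
            unfold emb1 at this; push_cast; push_cast at this; linarith)
      rcases k with ⟨h, h'⟩ | ⟨h, h'⟩
      · left; rw [Zsqrtd.ext_iff]; exact ⟨h, show c₁.im = 0 by omega⟩
      · right; rw [Zsqrtd.ext_iff]; exact ⟨h, show c₁.im = -1 by omega⟩
    -- helper : if a_i = 0 then b_i = 0
    have b_of_a : ∀ a b c : ℤ√2, a = 0 →
        IsPSD (emb1 a) (2 * emb1 b) (emb1 c) →
        IsPSD (emb2 a) (2 * emb2 b) (emb2 c) → b = 0 := by
      intro a b c h0 h1' h2'
      rw [h0, emb1_zero] at h1'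
      rw [h0, emb2_zero] at h2'
      have e1 := psd_b_of_a h1'
      have e2 := psd_b_of_a h2'
      exact emb_eq_zero b (by linarith) (by linarith)
    have b_of_c : ∀ a b c : ℤ√2, c = 0 →
        IsPSD (emb1 a) (2 * emb1 b) (emb1 c) →
        IsPSD (emb2 a) (2 * emb2 b) (emb2 c) → b = 0 := by
      intro a b c h0 h1' h2'
      rw [h0, emb1_zero] at h1'
      rw [h0, emb2_zero] at h2'
      have e1 := psd_b_of_c h1'
      have e2 := psd_b_of_c h2'
      exact emb_eq_zero b (by linarith) (by linarith)
    rcases haval with ha1 | ha1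
    · -- a₁ = 0, so b₁ = 0
      have hb1 : b₁ = 0 := b_of_a a₁ b₁ c₁ ha1 h11 h12
      rcases hcval with hc1 | hc1
      · exact hn1 ⟨ha1, hb1, hc1⟩
      · -- c₁ = ⟨2,-1⟩, so c₂ = 0, so b₂ = 0, but b₁+b₂ = 1
        have hc2 : c₂ = 0 := by
          rw [hc1] at hc
          exact add_eq_left.mp hc
        have hb2 : b₂ = 0 := b_of_c a₂ b₂ c₂ hc2 h21 h22
        rw [hb1, hb2] at hb
        simp at hb
    · -- a₁ = ⟨2,1⟩, so a₂ = 0, so b₂ = 0, so b₁ = 1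
      have ha2 : a₂ = 0 := by
        rw [ha1] at ha
        exact add_eq_left.mp ha
      have hb2 : b₂ = 0 := b_of_a a₂ b₂ c₂ ha2 h21 h22
      have hb1 : b₁ = 1 := by rw [hb2] at hb; simpa using hb
      rcases hcval with hc1 | hc1
      · -- c₁ = 0 forces b₁ = 0, contradiction
        have : b₁ = 0 := b_of_c a₁ b₁ c₁ hc1 h11 h12
        rw [hb1] at this
        exact one_ne_zero this
      · -- c₂ = 0, so Q₂ = 0, contradiction
        have hc2 : c₂ = 0 := by
          rw [hc1] at hc
          exact add_eq_left.mp hc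
        exact hn2 ⟨ha2, hb2, hc2⟩
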